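/- Let 0 ≤ ℓ ≤ ℓ' be integers and let e be a boring extension of Σ*_ℓ = {u^0 <lex u^1 <lex ... <lex u^{n-1}}. Enumerate Σ*_{ℓ'} = {v^0 <lex v^1 <lex ... <lex v^{m-1}} and define the word e' of length m by e'_i = e_j, where j is the index with v^i|_ℓ = u^j. Then e' is a boring extension of Σ*_{ℓ'}. -/

import Mathlib

/-- The three-letter alphabet `Σ = {L, X, R}`. -/
inductive Sig : Type
  | L
  | X
  | R
  deriving DecidableEq

namespace Sig

def val : Sig → ℕ
  | L => 0
  | X => 1
  | R => 2

/-- The order `L <lex X <lex R` on letters. -/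
def le (a b : Sig) : Prop := a.val ≤ b.val

def lt (a b : Sig) : Prop := a.val < b.val

end Sig

/-- Finite words over the alphabet `Σ = {L, X, R}`. -/
abbrev Word : Type := List Sig

/-- The `i`-th letter of `w` (with a junk value out of range). -/
def idx (w : Word) (i : ℕ) : Sig := w.getD i Sig.L

/-- Strict lexicographic order on words: comparison at the first differing position, a
proper initial segment preceding its extensions. -/
def lexLt (u v : Word) : Prop :=
  (∃ i, i < u.length ∧ i < v.length ∧ Sig.lt (idx u i) (idx v i) ∧
    ∀ j < i, idx u j = idx v j) ∨
  (u.length < v.length ∧ ∀ j < u.length, idx u j = idx v j)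

def lexLe (u v : Word) : Prop := lexLt u v ∨ u = v

/-- The relation `≺`: there is `i < min(|u|,|v|)` with `(u_i, v_i) = (L, R)` and
`u_j ≤lex v_j` for all `j < i`. -/
def prec (u v : Word) : Prop :=
  ∃ i, i < u.length ∧ i < v.length ∧ idx u i = Sig.L ∧ idx v i = Sig.R ∧
    ∀ j < i, Sig.le (idx u j) (idx v j)

/-- The relation `⪯`. -/
def preceq (u v : Word) : Prop := prec u v ∨ u = v

/-- The relation `⊴`: element-wise comparison of words of the same length. -/
def trleq (u v : Word) : Prop :=
  u.length = v.length ∧ ∀ i < u.length, Sig.le (idx u i) (idx v i)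

/-- The relation `⊥`: `⊴`-incomparability. -/
def perp (u v : Word) : Prop := ¬ trleq u v ∧ ¬ trleq v u

/-- `u` and `v` are related if `u ⪯ v`, `v ⪯ u` or `u ⊥ v`. -/
def related (u v : Word) : Prop := preceq u v ∨ preceq v u ∨ perp u v

/-- The compatibility conditions for a pair `u ≤lex v`. -/
def compatPair (u v : Word) : Prop :=
  (∀ l < min u.length v.length, ¬ (idx u l = Sig.R ∧ idx v l = Sig.L)) ∧
  ((∃ l < min u.length v.length, idx u l = Sig.L ∧ idx v l = Sig.R) →
    ∀ l < min u.length v.length, Sig.le (idx u l) (idx v l))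

/-- `u` and `v` are compatible: the `≤lex`-smaller of the two satisfies the compatibility
conditions with the `≤lex`-larger. -/
def compatible (u v : Word) : Prop :=
  (lexLe u v ∧ compatPair u v) ∨ (lexLe v u ∧ compatPair v u)

/-- `S̄`: the segClosure of `S` under initial segments. -/
def segClosure (S : Set Word) : Set Word := {u | ∃ w ∈ S, u <+: w}

/-- Level `l` of a set of words. -/
def level (S : Set Word) (l : ℕ) : Set Word := {w | w ∈ S ∧ w.length = l}

/-- `S̄_l` : level `l` of the segClosure of `S`. -/
def cLevel (S : Set Word) (l : ℕ) : Set Word := level (segClosure S) l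

/-- Isomorphism of level structures `(A; ⪯, ⊴, ≤lex)`: a bijection preserving and
reflecting `⪯`, `⊴` and `≤lex`. -/
def LevelIso (A B : Set Word) : Prop :=
  ∃ e : Word → Word, Set.BijOn e A B ∧
    ∀ u ∈ A, ∀ v ∈ A,
      (preceq u v ↔ preceq (e u) (e v)) ∧
      (trleq u v ↔ trleq (e u) (e v)) ∧
      (lexLe u v ↔ lexLe (e u) (e v))

/-- A level `i` of `S` is interesting. -/
def Interesting (S : Set Word) (i : ℕ) : Prop :=
  ¬ LevelIso (cLevel S i) (cLevel S (i + 1)) ∨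
  (∃ u ∈ cLevel S (i + 1), ∃ v ∈ cLevel S (i + 1),
    ¬ compatible u v ∧ compatible (u.take i) (v.take i)) ∨
  (∃ u ∈ S, u.length = i)

/-- `τ_S(w)`: delete the characters of `w` whose indices are not interesting levels of `S`. -/
noncomputable def tauW (S : Set Word) (w : Word) : Word :=
  ((List.range w.length).filter
    (fun i => @decide (Interesting S i) (Classical.propDecidable _))).map (fun i => idx w i)

/-- A function is shape-preserving if it commutes with taking embedding types. -/
def ShapePreserving (S : Set Word) (f : Word → Word) : Prop :=
  ∀ w ∈ S, tauW S w = tauW (f '' S) (f w)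

/-- `A⌢c`. -/
def appendSet (A : Set Word) (c : Sig) : Set Word := (fun w => w ++ [c]) '' A

def LeafLevelAt (S : Set Word) (l : ℕ) (w : Word) : Prop :=
  w ∈ cLevel S l ∧ (∀ u ∈ cLevel S l, u ≠ w → related w u) ∧
  cLevel S (l + 1) = appendSet (cLevel S l \ {w}) Sig.X

def LeafLevel (S : Set Word) (l : ℕ) : Prop := ∃ w, LeafLevelAt S l w

def SplitLevelAt (S : Set Word) (l : ℕ) (w : Word) : Prop :=
  w ∈ cLevel S l ∧
  cLevel S (l + 1) =
    appendSet {z ∈ cLevel S l | lexLt z w} Sig.X ∪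
    {w ++ [Sig.X], w ++ [Sig.R]} ∪
    appendSet {z ∈ cLevel S l | lexLt w z} Sig.R

def SplitLevel (S : Set Word) (l : ℕ) : Prop := ∃ w, SplitLevelAt S l w

def NewPerpLevelAt (S : Set Word) (l : ℕ) (v w : Word) : Prop :=
  v ∈ cLevel S l ∧ w ∈ cLevel S l ∧ lexLt v w ∧ ¬ related v w ∧
  (∀ u ∈ cLevel S l, lexLt v u → lexLt u w → perp u v ∨ perp u w) ∧
  cLevel S (l + 1) =
    appendSet {z ∈ cLevel S l | lexLt z v} Sig.X ∪
    {v ++ [Sig.R]} ∪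
    appendSet {z ∈ cLevel S l | lexLt v z ∧ lexLt z w ∧ perp z v} Sig.X ∪
    appendSet {z ∈ cLevel S l | lexLt v z ∧ lexLt z w ∧ ¬ perp z v} Sig.R ∪
    {w ++ [Sig.X]} ∪
    appendSet {z ∈ cLevel S l | lexLt w z} Sig.R

def NewPerpLevel (S : Set Word) (l : ℕ) : Prop := ∃ v w, NewPerpLevelAt S l v w

def NewPrecLevelAt (S : Set Word) (l : ℕ) (v w : Word) : Prop :=
  v ∈ cLevel S l ∧ w ∈ cLevel S l ∧ lexLt v w ∧ ¬ related v w ∧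
  (∀ u ∈ cLevel S l, lexLt u v → preceq u w ∨ perp u v) ∧
  (∀ u ∈ cLevel S l, lexLt w u → preceq v u ∨ perp w u) ∧
  cLevel S (l + 1) =
    appendSet {z ∈ cLevel S l | lexLt z v ∧ perp z v} Sig.X ∪
    appendSet {z ∈ cLevel S l | lexLt z v ∧ ¬ perp z v} Sig.L ∪
    {v ++ [Sig.L]} ∪
    appendSet {z ∈ cLevel S l | lexLt v z ∧ lexLt z w} Sig.X ∪
    {w ++ [Sig.R]} ∪
    appendSet {z ∈ cLevel S l | lexLt w z ∧ perp w z} Sig.X ∪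
    appendSet {z ∈ cLevel S l | lexLt w z ∧ ¬ perp w z} Sig.R

def NewPrecLevel (S : Set Word) (l : ℕ) : Prop := ∃ v w, NewPrecLevelAt S l v w

def ExactlyOne (a b c d : Prop) : Prop :=
  (a ∧ ¬b ∧ ¬c ∧ ¬d) ∨ (¬a ∧ b ∧ ¬c ∧ ¬d) ∨ (¬a ∧ ¬b ∧ c ∧ ¬d) ∨ (¬a ∧ ¬b ∧ ¬c ∧ d)

/-- A poset-diary: an antichain under the initial segment relation such that on each level
below the supremum of lengths exactly one of the four critical events happens. -/
def PosetDiary (S : Set Word) : Prop :=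
  (∀ u ∈ S, ∀ v ∈ S, u <+: v → u = v) ∧
  ∀ l : ℕ, (∃ w ∈ S, l < w.length) →
    ExactlyOne (LeafLevel S l) (SplitLevel S l) (NewPerpLevel S l) (NewPrecLevel S l)

/-- `A⌢e`: extend each word of `A` by the letter that the extension `e` assigns to it. -/
def extSet (A : Set Word) (e : Word → Sig) : Set Word := (fun w => w ++ [e w]) '' A

/-- `e` is a boring extension of `A ⊆ Σ*_l` if level `l` is not an interesting level of
`A⌢e`. -/
def BoringExt (A : Set Word) (l : ℕ) (e : Word → Sig) : Prop :=
  ¬ Interesting (extSet A e) l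

/-!
On a full level `Σ*_n` the map `w ↦ w⌢f(w)` is the only `≤lex`-isomorphism onto `Σ*_n⌢f`
(a finite chain has no other), so `f` is boring exactly when `f` is `⊴`-monotone, an `(L, R)`
pair created by the appended letters only occurs between words already related by `≺`, and
appending preserves compatibility. The first two conditions pass from `e` to `v ↦ e(v|_ℓ)`
because `⊴` and `≺` behave well under taking initial segments. For the third, a new `(L, R)`
pair in the last letter is traced back, through the second condition, to an `(L, R)` pair of
`u|_ℓ, v|_ℓ`, and then compatibility of `u, v` gives `u ⊴ v`.
-/

namespace Sig

lemma val_injective : Function.Injective val := by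
  intro a b h
  cases a <;> cases b <;> simp_all [val]

instance : Fintype Sig where
  elems := {L, X, R}
  complete a := by cases a <;> simp

lemma le_refl (a : Sig) : a.le a := Nat.le_refl _

lemma lt_irrefl (a : Sig) : ¬ a.lt a := Nat.lt_irrefl _

lemma lt_trichotomy (a b : Sig) : a.lt b ∨ a = b ∨ b.lt a :=
  (Nat.lt_trichotomy a.val b.val).imp_right (Or.imp_left (val_injective ·))

lemma le_of_eq_L_of_eq_R {a b : Sig} (ha : a = L) (hb : b = R) : a.le b := by
  subst ha hb
  exact Nat.zero_le _

end Sig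

open Sig (L R)

section Idx

variable {u v w : Word}

lemma idx_append_of_lt (c : Sig) {i : ℕ} (h : i < w.length) : idx (w ++ [c]) i = idx w i :=
  List.getD_append _ _ _ _ h

lemma idx_append_length (w : Word) (c : Sig) : idx (w ++ [c]) w.length = c := by
  simp [idx]

lemma idx_take {l i : ℕ} (h : i < l) : idx (w.take l) i = idx w i := by
  simp [idx, List.getD_eq_getElem?_getD, h]

lemma Word.ext_idx (h : u.length = v.length) (hi : ∀ i < u.length, idx u i = idx v i) :
    u = v := by
  refine List.ext_getElem h fun i hu hv => ?_
  simpa only [idx, List.getD_eq_getElem _ _ hu, List.getD_eq_getElem _ _ hv] using hi i hu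

lemma take_append_singleton_of_length_eq (c : Sig) {n : ℕ} (h : w.length = n) :
    (w ++ [c]).take n = w := by
  subst h
  exact List.take_left

lemma append_singleton_eq_iff {u v : Word} {a b : Sig} (hab : u = v → a = b) :
    u ++ [a] = v ++ [b] ↔ u = v :=
  ⟨fun huv => List.append_inj_left' huv rfl, fun huv => by rw [huv, hab huv]⟩

end Idx

section AppendSingleton

variable {u v : Word} (a b : Sig)

lemma forall_lt_idx_append_iff (h : u.length = v.length) {n : ℕ} (hn : n ≤ u.length)
    (P : Sig → Sig → Prop) :
    (∀ i < n, P (idx (u ++ [a]) i) (idx (v ++ [b]) i)) ↔ ∀ i < n, P (idx u i) (idx v i) :=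
  forall₂_congr fun i hi => by
    rw [idx_append_of_lt _ (by omega), idx_append_of_lt _ (by omega)]

lemma forall_lt_length_append_iff (h : u.length = v.length) (P : Sig → Sig → Prop) :
    (∀ i < u.length + 1, P (idx (u ++ [a]) i) (idx (v ++ [b]) i)) ↔
      (∀ i < u.length, P (idx u i) (idx v i)) ∧ P a b := by
  rw [Nat.forall_lt_succ_right, forall_lt_idx_append_iff a b h le_rfl, idx_append_length, h,
    idx_append_length]

lemma exists_lt_length_append_iff (h : u.length = v.length) (P : Sig → Sig → Prop) :
    (∃ i < u.length + 1, P (idx (u ++ [a]) i) (idx (v ++ [b]) i)) ↔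
      (∃ i < u.length, P (idx u i) (idx v i)) ∨ P a b := by
  rw [Nat.exists_lt_succ_right]
  refine or_congr (exists_congr fun i => and_congr_right fun hi => ?_) ?_
  · rw [idx_append_of_lt _ hi, idx_append_of_lt _ (h ▸ hi)]
  · rw [idx_append_length, h, idx_append_length]

lemma trleq_iff_of_length_eq (h : u.length = v.length) :
    trleq u v ↔ ∀ i < u.length, (idx u i).le (idx v i) :=
  and_iff_right h

lemma trleq_append_singleton_iff (h : u.length = v.length) :
    trleq (u ++ [a]) (v ++ [b]) ↔ trleq u v ∧ a.le b := by
  rw [trleq_iff_of_length_eq (by simp [h]), trleq_iff_of_length_eq h, List.length_append,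
    List.length_singleton]
  exact forall_lt_length_append_iff a b h _

lemma prec_iff_of_length_eq (h : u.length = v.length) :
    prec u v ↔ ∃ i < u.length, idx u i = L ∧ idx v i = R ∧ ∀ j < i, (idx u j).le (idx v j) := by
  simp only [prec, ← h, and_self_left]

lemma prec_append_singleton_iff (h : u.length = v.length) :
    prec (u ++ [a]) (v ++ [b]) ↔ prec u v ∨ (trleq u v ∧ a = L ∧ b = R) := by
  rw [prec_iff_of_length_eq (by simp [h]), prec_iff_of_length_eq h, trleq_iff_of_length_eq h,
    List.length_append, List.length_singleton, Nat.exists_lt_succ_right]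
  refine or_congr (exists_congr fun i => and_congr_right fun hi => ?_) ?_
  · rw [idx_append_of_lt _ hi, idx_append_of_lt _ (h ▸ hi),
      forall_lt_idx_append_iff a b h hi.le Sig.le]
  · rw [idx_append_length, h, idx_append_length, ← h,
      forall_lt_idx_append_iff a b h le_rfl Sig.le]
    tauto

lemma lexLt_iff_of_length_eq (h : u.length = v.length) :
    lexLt u v ↔ ∃ i < u.length, (idx u i).lt (idx v i) ∧ ∀ j < i, idx u j = idx v j := by
  simp only [lexLt, ← h, and_self_left, lt_self_iff_false, false_and, or_false]

lemma Word.eq_iff_forall_idx (h : u.length = v.length) :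
    u = v ↔ ∀ i < u.length, idx u i = idx v i :=
  ⟨fun huv _ _ => huv ▸ rfl, Word.ext_idx h⟩

lemma lexLt_append_singleton_iff (h : u.length = v.length) :
    lexLt (u ++ [a]) (v ++ [b]) ↔ lexLt u v ∨ (u = v ∧ a.lt b) := by
  rw [lexLt_iff_of_length_eq (by simp [h]), lexLt_iff_of_length_eq h, List.length_append,
    List.length_singleton, Nat.exists_lt_succ_right]
  refine or_congr (exists_congr fun i => and_congr_right fun hi => ?_) ?_
  · rw [idx_append_of_lt _ hi, idx_append_of_lt _ (h ▸ hi),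
      forall_lt_idx_append_iff a b h hi.le Eq]
  · rw [idx_append_length, h, idx_append_length, ← h, forall_lt_idx_append_iff a b h le_rfl Eq,
      ← Word.eq_iff_forall_idx h, and_comm]

lemma lexLe_append_singleton_iff (h : u.length = v.length) (hab : u = v → a = b) :
    lexLe (u ++ [a]) (v ++ [b]) ↔ lexLe u v := by
  rw [lexLe, lexLe, lexLt_append_singleton_iff a b h, append_singleton_eq_iff hab]
  constructor
  · rintro ((hlt | ⟨huv, -⟩) | huv)
    exacts [Or.inl hlt, Or.inr huv, Or.inr huv]
  · exact Or.imp_left Or.inl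

lemma compatPair_iff_of_length_eq (h : u.length = v.length) :
    compatPair u v ↔ (∀ i < u.length, ¬ (idx u i = R ∧ idx v i = L)) ∧
      ((∃ i < u.length, idx u i = L ∧ idx v i = R) → trleq u v) := by
  rw [compatPair, trleq_iff_of_length_eq h, ← h, min_self]

lemma compatPair_append_singleton_iff (h : u.length = v.length) :
    compatPair (u ++ [a]) (v ++ [b]) ↔ compatPair u v ∧ ¬ (a = R ∧ b = L) ∧
      ((∃ i < u.length, idx u i = L ∧ idx v i = R) ∨ (a = L ∧ b = R) →
        trleq u v ∧ a.le b) := by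
  rw [compatPair_iff_of_length_eq (by simp [h]), compatPair_iff_of_length_eq h,
    trleq_append_singleton_iff a b h, List.length_append, List.length_singleton,
    forall_lt_length_append_iff a b h fun x y => ¬ (x = R ∧ y = L),
    exists_lt_length_append_iff a b h fun x y => x = L ∧ y = R]
  constructor
  · rintro ⟨⟨hRL, hab⟩, hLR⟩
    exact ⟨⟨hRL, fun hE => (hLR (Or.inl hE)).1⟩, hab, hLR⟩
  · rintro ⟨⟨hRL, -⟩, hab, hLR⟩
    exact ⟨⟨hRL, hab⟩, hLR⟩

end AppendSingleton

lemma preceq_iff_preceq_append_iff {u v : Word} {a b : Sig} (h : u.length = v.length)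
    (hab : u = v → a = b) :
    (preceq u v ↔ preceq (u ++ [a]) (v ++ [b])) ↔ (trleq u v → a = L → b = R → prec u v) := by
  rw [preceq, preceq, prec_append_singleton_iff a b h, append_singleton_eq_iff hab]
  constructor
  · intro hiff ht ha hb
    rcases hiff.mpr (Or.inl (Or.inr ⟨ht, ha, hb⟩)) with hp | rfl
    · exact hp
    · exact Sig.noConfusion (ha.symm.trans ((hab rfl).trans hb))
  · refine fun himp => ⟨Or.imp_left Or.inl, ?_⟩
    rintro ((hp | ⟨ht, ha, hb⟩) | rfl)
    exacts [Or.inl hp, Or.inl (himp ht ha hb), Or.inr rfl]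

section LexOrder

variable {u v w : Word}

lemma lexLt_irrefl (u : Word) : ¬ lexLt u u := by
  rw [lexLt_iff_of_length_eq rfl]
  rintro ⟨i, -, hlt, -⟩
  exact Sig.lt_irrefl _ hlt

lemma lexLt_trans_of_length_eq (huv : u.length = v.length) (hvw : v.length = w.length)
    (h₁ : lexLt u v) (h₂ : lexLt v w) : lexLt u w := by
  rw [lexLt_iff_of_length_eq huv] at h₁
  rw [lexLt_iff_of_length_eq hvw] at h₂
  rw [lexLt_iff_of_length_eq (huv.trans hvw)]
  obtain ⟨i, hi, hlt₁, heq₁⟩ := h₁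
  obtain ⟨j, hj, hlt₂, heq₂⟩ := h₂
  rcases Nat.lt_trichotomy i j with hij | rfl | hji
  · exact ⟨i, hi, heq₂ i hij ▸ hlt₁, fun k hk => (heq₁ k hk).trans (heq₂ k (hk.trans hij))⟩
  · exact ⟨i, hi, Nat.lt_trans hlt₁ hlt₂, fun k hk => (heq₁ k hk).trans (heq₂ k hk)⟩
  · exact ⟨j, by omega, heq₁ j hji ▸ hlt₂,
      fun k hk => (heq₁ k (hk.trans hji)).trans (heq₂ k hk)⟩

lemma lexLt_trichotomy_of_length_eq (h : u.length = v.length) :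
    lexLt u v ∨ u = v ∨ lexLt v u := by
  classical
  by_cases huv : u = v
  · exact Or.inr (Or.inl huv)
  have hne : ∃ i, i < u.length ∧ idx u i ≠ idx v i := by
    by_contra! hall
    exact huv (Word.ext_idx h hall)
  obtain ⟨hi, hdiff⟩ := Nat.find_spec hne
  have hagree : ∀ j < Nat.find hne, idx u j = idx v j := fun j hj => by
    by_contra hj'
    exact Nat.find_min hne hj ⟨hj.trans hi, hj'⟩
  rw [lexLt_iff_of_length_eq h, lexLt_iff_of_length_eq h.symm]
  rcases Sig.lt_trichotomy (idx u (Nat.find hne)) (idx v (Nat.find hne)) with hlt | heq | hgt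
  · exact Or.inl ⟨_, hi, hlt, hagree⟩
  · exact absurd heq hdiff
  · exact Or.inr (Or.inr ⟨_, h ▸ hi, hgt, fun j hj => (hagree j hj).symm⟩)

end LexOrder

section Take

variable {u v : Word} {l : ℕ}

lemma trleq_take (hl : l ≤ u.length) (h : trleq u v) : trleq (u.take l) (v.take l) := by
  obtain ⟨hlen, hle⟩ := h
  refine ⟨by simp [hlen], fun i hi => ?_⟩
  have hil : i < l := by simp only [List.length_take] at hi; omega
  rw [idx_take hil, idx_take hil]
  exact hle i (by omega)

lemma lexLe_take (h : u.length = v.length) (hl : l ≤ u.length) (hle : lexLe u v) :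
    lexLe (u.take l) (v.take l) := by
  have hlen : (u.take l).length = (v.take l).length := by simp [h]
  rcases hle with hlt | rfl
  · obtain ⟨i, hi, hlt, heq⟩ := (lexLt_iff_of_length_eq h).mp hlt
    rcases Nat.lt_or_ge i l with hil | hli
    · refine Or.inl ((lexLt_iff_of_length_eq hlen).mpr ⟨i, by simp; omega, ?_, fun j hj => ?_⟩)
      · rwa [idx_take hil, idx_take hil]
      · rw [idx_take (hj.trans hil), idx_take (hj.trans hil)]
        exact heq j hj
    · refine Or.inr (Word.ext_idx hlen fun j hj => ?_)
      have hjl : j < l := by simp only [List.length_take] at hj; omega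
      rw [idx_take hjl, idx_take hjl]
      exact heq j (by omega)
  · exact Or.inr rfl

lemma compatPair_take (h : u.length = v.length) (hl : l ≤ u.length) (hc : compatPair u v) :
    compatPair (u.take l) (v.take l) := by
  have hlen : (u.take l).length = l := by simp [hl]
  rw [compatPair_iff_of_length_eq h] at hc
  rw [compatPair_iff_of_length_eq (by simp [h]), hlen]
  refine ⟨fun i hi => ?_, fun ⟨i, hi, hLR⟩ => trleq_take hl (hc.2 ⟨i, by omega, ?_⟩)⟩
  · rw [idx_take hi, idx_take hi]
    exact hc.1 i (by omega)
  · rwa [idx_take hi, idx_take hi] at hLR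

lemma compatible_take (h : u.length = v.length) (hl : l ≤ u.length) (hc : compatible u v) :
    compatible (u.take l) (v.take l) :=
  hc.imp (fun ⟨hle, hp⟩ => ⟨lexLe_take h hl hle, compatPair_take h hl hp⟩)
    (fun ⟨hle, hp⟩ => ⟨lexLe_take h.symm (h ▸ hl) hle, compatPair_take h.symm (h ▸ hl) hp⟩)

lemma prec_of_prec_take (hp : prec (u.take l) (v.take l)) : prec u v := by
  obtain ⟨i, hiu, hiv, hL, hR, hle⟩ := hp
  have hil : i < l := by simp only [List.length_take] at hiu; omega
  refine ⟨i, by simp at hiu; omega, by simp at hiv; omega, by rwa [← idx_take hil],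
    by rwa [← idx_take hil], fun j hj => ?_⟩
  simpa only [idx_take (hj.trans hil)] using hle j hj

end Take

section Compatible

variable {u v : Word}

lemma compatPair_refl (u : Word) : compatPair u u :=
  ⟨fun _ _ ⟨hR, hL⟩ => Sig.noConfusion (hR.symm.trans hL), fun _ _ _ => Sig.le_refl _⟩

lemma compatPair_of_compatible (h : u.length = v.length) (hc : compatible u v)
    (hle : lexLe u v) : compatPair u v := by
  rcases hc with ⟨-, hp⟩ | ⟨hle', hp⟩
  · exact hp
  rcases hle with hlt | rfl
  · rcases hle' with hlt' | rfl
    · exact absurd (lexLt_trans_of_length_eq h h.symm hlt hlt') (lexLt_irrefl u)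
    · exact hp
  · exact hp

lemma compatible_append_of_compatPair_append {n : ℕ} {f : Word → Sig}
    (hf : ∀ u v : Word, u.length = n → v.length = n → lexLt u v → compatPair u v →
      compatPair (u ++ [f u]) (v ++ [f v]))
    (hu : u.length = n) (hv : v.length = n) (hc : compatible u v) :
    compatible (u ++ [f u]) (v ++ [f v]) := by
  have h : u.length = v.length := hu.trans hv.symm
  rcases lexLt_trichotomy_of_length_eq h with hlt | rfl | hlt
  · refine Or.inl ⟨Or.inl ((lexLt_append_singleton_iff _ _ h).mpr (Or.inl hlt)), ?_⟩
    exact hf u v hu hv hlt (compatPair_of_compatible h hc (Or.inl hlt))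
  · exact Or.inl ⟨Or.inr rfl, compatPair_refl _⟩
  · refine Or.inr ⟨Or.inl ((lexLt_append_singleton_iff _ _ h.symm).mpr (Or.inl hlt)), ?_⟩
    exact hf v u hv hu hlt (compatPair_of_compatible h.symm hc.symm (Or.inl hlt))

end Compatible

section LexRank

variable {A B : Set Word} {m : ℕ}

lemma ncard_sep_lexLt_lt_of_lexLt (hB : ∀ w ∈ B, w.length = m) (hfin : B.Finite) {c d : Word}
    (hc : c ∈ B) (hd : d ∈ B) (hcd : lexLt c d) :
    {x ∈ B | lexLt x c}.ncard < {x ∈ B | lexLt x d}.ncard := by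
  refine Set.ncard_lt_ncard ⟨fun x ⟨hx, hxc⟩ => ⟨hx, ?_⟩, fun hsub => ?_⟩
    (hfin.subset (Set.sep_subset _ _))
  · rw [← hB c hc] at hB
    exact lexLt_trans_of_length_eq (hB x hx) (hB d hd).symm hxc hcd
  · exact lexLt_irrefl c (hsub ⟨hc, hcd⟩).2

lemma eq_of_ncard_sep_lexLt_eq (hB : ∀ w ∈ B, w.length = m) (hfin : B.Finite) {c d : Word}
    (hc : c ∈ B) (hd : d ∈ B)
    (h : {x ∈ B | lexLt x c}.ncard = {x ∈ B | lexLt x d}.ncard) : c = d := by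
  rcases lexLt_trichotomy_of_length_eq ((hB c hc).trans (hB d hd).symm) with hlt | heq | hlt
  · exact absurd h (ncard_sep_lexLt_lt_of_lexLt hB hfin hc hd hlt).ne
  · exact heq
  · exact absurd h (ncard_sep_lexLt_lt_of_lexLt hB hfin hd hc hlt).ne'

lemma Set.BijOn.image_sep_lexLt {g : Word → Word} (hg : Set.BijOn g A B)
    (hord : ∀ u ∈ A, ∀ v ∈ A, lexLe u v ↔ lexLe (g u) (g v)) {a : Word} (ha : a ∈ A) :
    g '' {x ∈ A | lexLt x a} = {x ∈ B | lexLt x (g a)} := by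
  ext x
  constructor
  · rintro ⟨y, ⟨hy, hya⟩, rfl⟩
    refine ⟨hg.mapsTo hy, ((hord y hy a ha).mp (Or.inl hya)).resolve_right fun heq => ?_⟩
    exact lexLt_irrefl a (hg.injOn hy ha heq ▸ hya)
  · rintro ⟨hx, hxa⟩
    obtain ⟨y, hy, rfl⟩ := hg.surjOn hx
    refine ⟨y, ⟨hy, ((hord y hy a ha).mpr (Or.inl hxa)).resolve_right ?_⟩, rfl⟩
    rintro rfl
    exact lexLt_irrefl _ hxa

/-- Both maps send `a` to the element of `B` with as many `lexLt`-predecessors as `a` has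
in `A`. -/
lemma Set.BijOn.eqOn_of_lexLe_iff (hB : ∀ w ∈ B, w.length = m) (hfin : A.Finite)
    {g φ : Word → Word} (hg : Set.BijOn g A B) (hφ : Set.BijOn φ A B)
    (hgord : ∀ u ∈ A, ∀ v ∈ A, lexLe u v ↔ lexLe (g u) (g v))
    (hφord : ∀ u ∈ A, ∀ v ∈ A, lexLe u v ↔ lexLe (φ u) (φ v)) : Set.EqOn g φ A := by
  intro a ha
  refine eq_of_ncard_sep_lexLt_eq hB (hg.image_eq ▸ hfin.image g) (hg.mapsTo ha) (hφ.mapsTo ha) ?_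
  rw [← hg.image_sep_lexLt hgord ha, ← hφ.image_sep_lexLt hφord ha,
    (hg.injOn.mono (Set.sep_subset _ _)).ncard_image,
    (hφ.injOn.mono (Set.sep_subset _ _)).ncard_image]

end LexRank

section FullLevel

variable (n : ℕ) (f : Word → Sig)

def ExtMonotone : Prop :=
  ∀ u v : Word, u.length = n → v.length = n → trleq u v → (f u).le (f v)

def ExtReflectsPrec : Prop :=
  ∀ u v : Word, u.length = n → v.length = n → trleq u v → f u = L → f v = R → prec u v

def ExtPreservesCompatible : Prop :=
  ∀ u v : Word, u.length = n → v.length = n → compatible u v →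
    compatible (u ++ [f u]) (v ++ [f v])

lemma cLevel_extSet_full :
    cLevel (extSet {w : Word | w.length = n} f) n = {w : Word | w.length = n} := by
  ext w
  refine ⟨And.right, fun hw => ⟨⟨w ++ [f w], ⟨w, hw, rfl⟩, List.prefix_append w [f w]⟩, hw⟩⟩

lemma cLevel_extSet_full_succ :
    cLevel (extSet {w : Word | w.length = n} f) (n + 1) = extSet {w : Word | w.length = n} f := by
  ext w
  constructor
  · rintro ⟨⟨_, ⟨x, hx, rfl⟩, hpre⟩, hw⟩
    have hx : x.length = n := hx
    exact ⟨x, hx, (hpre.eq_of_length (by simp [hx, hw])).symm⟩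
  · rintro ⟨x, hx, rfl⟩
    have hx : x.length = n := hx
    exact ⟨⟨x ++ [f x], ⟨x, hx, rfl⟩, List.prefix_refl _⟩, by simp [hx]⟩

lemma levelIso_extSet_full_iff_append :
    LevelIso {w : Word | w.length = n} (extSet {w : Word | w.length = n} f) ↔
      ∀ u v : Word, u.length = n → v.length = n →
        (preceq u v ↔ preceq (u ++ [f u]) (v ++ [f v])) ∧
        (trleq u v ↔ trleq (u ++ [f u]) (v ++ [f v])) := by
  have hbij : Set.BijOn (fun w => w ++ [f w]) {w : Word | w.length = n}
      (extSet {w : Word | w.length = n} f) :=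
    Set.InjOn.bijOn_image fun u _ v _ huv => List.append_inj_left' huv rfl
  have hlex : ∀ u ∈ {w : Word | w.length = n}, ∀ v ∈ {w : Word | w.length = n},
      lexLe u v ↔ lexLe (u ++ [f u]) (v ++ [f v]) := fun u hu v hv =>
    (lexLe_append_singleton_iff _ _ (hu.trans hv.symm) (congrArg f)).symm
  constructor
  · rintro ⟨g, hg, hiso⟩ u v hu hv
    have hlen : ∀ w ∈ extSet {w : Word | w.length = n} f, w.length = n + 1 := by
      rintro _ ⟨x, hx, rfl⟩
      simpa using hx
    have hgφ := hg.eqOn_of_lexLe_iff hlen (List.finite_length_eq Sig n) hbij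
      (fun u hu v hv => (hiso u hu v hv).2.2) hlex
    have hgu : g u = u ++ [f u] := hgφ hu
    have hgv : g v = v ++ [f v] := hgφ hv
    rw [← hgu, ← hgv]
    exact ⟨(hiso u hu v hv).1, (hiso u hu v hv).2.1⟩
  · intro h
    exact ⟨_, hbij, fun u hu v hv => ⟨(h u v hu hv).1, (h u v hu hv).2, hlex u hu v hv⟩⟩

lemma levelIso_extSet_full_iff :
    LevelIso {w : Word | w.length = n} (extSet {w : Word | w.length = n} f) ↔
      ExtReflectsPrec n f ∧ ExtMonotone n f := by
  simp only [levelIso_extSet_full_iff_append, ExtReflectsPrec, ExtMonotone, ← forall_and]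
  refine forall₄_congr fun u v hu hv => ?_
  have h : u.length = v.length := hu.trans hv.symm
  rw [preceq_iff_preceq_append_iff h (congrArg f), trleq_append_singleton_iff _ _ h,
    iff_self_and, imp_and]

lemma boringExt_full_iff :
    BoringExt {w : Word | w.length = n} n f ↔
      LevelIso {w : Word | w.length = n} (extSet {w : Word | w.length = n} f) ∧
        ExtPreservesCompatible n f := by
  have hlen : ¬ ∃ u ∈ extSet {w : Word | w.length = n} f, u.length = n := by
    rintro ⟨_, ⟨x, hx, rfl⟩, hlen⟩
    simp [show x.length = n from hx] at hlen
  have hcompat : (¬ ∃ u ∈ extSet {w : Word | w.length = n} f,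
      ∃ v ∈ extSet {w : Word | w.length = n} f,
        ¬ compatible u v ∧ compatible (u.take n) (v.take n)) ↔ ExtPreservesCompatible n f := by
    constructor
    · intro h u v hu hv hc
      by_contra hnc
      refine h ⟨_, ⟨u, hu, rfl⟩, _, ⟨v, hv, rfl⟩, hnc, ?_⟩
      rwa [take_append_singleton_of_length_eq _ hu, take_append_singleton_of_length_eq _ hv]
    · rintro h ⟨_, ⟨u, hu, rfl⟩, _, ⟨v, hv, rfl⟩, hnc, hc⟩
      rw [take_append_singleton_of_length_eq _ hu, take_append_singleton_of_length_eq _ hv] at hc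
      exact hnc (h u v hu hv hc)
  rw [BoringExt, Interesting, cLevel_extSet_full, cLevel_extSet_full_succ, not_or, not_or,
    not_not, hcompat, and_iff_left hlen]

end FullLevel

section Transfer

variable {l l' : ℕ} {e : Word → Sig}

lemma length_take_of_length_eq {u : Word} (hll : l ≤ l') (hu : u.length = l') :
    (u.take l).length = l := by
  simp [hu, hll]

lemma ExtMonotone.comp_take (hmono : ExtMonotone l e) (hll : l ≤ l') :
    ExtMonotone l' (fun v => e (v.take l)) := fun u v hu hv ht =>
  hmono _ _ (length_take_of_length_eq hll hu) (length_take_of_length_eq hll hv)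
    (trleq_take (by omega) ht)

lemma ExtReflectsPrec.comp_take (hprec : ExtReflectsPrec l e) (hll : l ≤ l') :
    ExtReflectsPrec l' (fun v => e (v.take l)) := fun u v hu hv ht hL hR =>
  prec_of_prec_take (hprec _ _ (length_take_of_length_eq hll hu)
    (length_take_of_length_eq hll hv) (trleq_take (by omega) ht) hL hR)

lemma ExtPreservesCompatible.comp_take (hcomp : ExtPreservesCompatible l e)
    (hprec : ExtReflectsPrec l e) (hmono : ExtMonotone l e) (hll : l ≤ l') :
    ExtPreservesCompatible l' (fun v => e (v.take l)) := by
  refine fun u v hu hv => compatible_append_of_compatPair_append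
    (f := fun v => e (v.take l)) (fun u v hu hv hlt hc => ?_) hu hv
  have h : u.length = v.length := hu.trans hv.symm
  have hp := length_take_of_length_eq hll hu
  have hq := length_take_of_length_eq hll hv
  have hpq : (u.take l).length = (v.take l).length := hp.trans hq.symm
  have hc' := compatPair_of_compatible (by simp [hpq])
    (hcomp _ _ hp hq (compatible_take h (by omega) (Or.inl ⟨Or.inl hlt, hc⟩)))
    ((lexLe_append_singleton_iff _ _ hpq (congrArg e)).mpr (lexLe_take h (by omega) (Or.inl hlt)))
  rw [compatPair_append_singleton_iff _ _ hpq] at hc'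
  obtain ⟨-, hRL, hLR⟩ := hc'
  rw [compatPair_append_singleton_iff _ _ h]
  refine ⟨hc, hRL, ?_⟩
  rw [compatPair_iff_of_length_eq h] at hc
  rintro (hE | ⟨hL, hR⟩)
  · have ht := hc.2 hE
    exact ⟨ht, hmono _ _ hp hq (trleq_take (by omega) ht)⟩
  · obtain ⟨i, hi, -, hLi, hRi, -⟩ :=
      prec_of_prec_take (hprec _ _ hp hq (hLR (Or.inr ⟨hL, hR⟩)).1 hL hR)
    exact ⟨hc.2 ⟨i, hi, hLi, hRi⟩, Sig.le_of_eq_L_of_eq_R hL hR⟩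

end Transfer

/-- a boring extension of the full level `Σ*_l` transfers, via restriction of
words to their initial segments of length `l`, to a boring extension of the full level
`Σ*_{l'}` for every `l' ≥ l`. -/
theorem boring_extension_transfers (l l' : ℕ) (hll : l ≤ l') (e : Word → Sig)
    (hbor : BoringExt {w : Word | w.length = l} l e) :
    BoringExt {w : Word | w.length = l'} l' (fun v => e (v.take l)) := by
  rw [boringExt_full_iff, levelIso_extSet_full_iff] at hbor ⊢
  obtain ⟨⟨hprec, hmono⟩, hcomp⟩ := hbor
  exact ⟨⟨hprec.comp_take hll, hmono.comp_take hll⟩, hcomp.comp_take hprec hmono hll⟩
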